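/- Mean ergodic theorem: Let (N,d) be a complete global Alexandrov NPC space and T:N→N a nonexpansive, distance convex mapping. For any p ∈ N with bounded orbit and any q ∈ N, the following are equivalent: (i) Tq = q and q lies in the closed convex hull of {p, Tp, T²p, …}; (ii) q = limₙ mₙ(p); (iii) q is the weak limit of (mₙ(p)); (iv) q is a weak cluster point of (mₙ(p)). Here mₙ(p) is the unique minimizer of r ↦ (1/n)Σ_{i=0}^{n−1} d²(r,Tⁱp). -/

import Mathlib

open Set

/-- A (constant-speed, unit-interval) geodesic from `p` to `q`. -/
def IsGeodesic {N : Type*} [MetricSpace N] (γ : ℝ → N) (p q : N) : Prop :=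
  γ 0 = p ∧ γ 1 = q ∧
    ∀ s ∈ Icc (0:ℝ) 1, ∀ t ∈ Icc (0:ℝ) 1, dist (γ s) (γ t) = |s - t| * dist p q

/-- A geodesic length space: any two points are joined by a geodesic. -/
def GeodesicSpace (N : Type*) [MetricSpace N] : Prop :=
  ∀ p q : N, ∃ γ : ℝ → N, IsGeodesic γ p q

/-- Global Alexandrov NPC (CAT(0)) space. -/
def NPCSpace (N : Type*) [MetricSpace N] : Prop :=
  GeodesicSpace N ∧
    ∀ (p q r : N) (γ : ℝ → N), IsGeodesic γ p r → ∀ t ∈ Icc (0:ℝ) 1,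
      dist q (γ t) ^ 2 ≤
        (1 - t) * dist q p ^ 2 + t * dist q r ^ 2 - t * (1 - t) * dist p r ^ 2

/-- A subset is convex if any two of its points are joined by a geodesic lying in the set. -/
def ConvexSubset {N : Type*} [MetricSpace N] (C : Set N) : Prop :=
  ∀ p ∈ C, ∀ q ∈ C, ∃ γ : ℝ → N, IsGeodesic γ p q ∧ ∀ t ∈ Icc (0:ℝ) 1, γ t ∈ C

/-- `C` is the convex hull of `S`: the smallest convex subset containing `S`. -/
def IsConvexHull {N : Type*} [MetricSpace N] (S C : Set N) : Prop :=
  ConvexSubset C ∧ S ⊆ C ∧ ∀ D : Set N, ConvexSubset D → S ⊆ D → C ⊆ D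
/-- `y` is a nearest-point projection of `x` onto the set `A`. -/
def IsProjOn {N : Type*} [MetricSpace N] (x y : N) (A : Set N) : Prop :=
  y ∈ A ∧ ∀ z ∈ A, dist x y ≤ dist x z

/-- Weak convergence of a sequence to `q`: along every geodesic arc through `q`,
the projections of the sequence converge to `q`. -/
def WeakLimit {N : Type*} [MetricSpace N] (x : ℕ → N) (q : N) : Prop :=
  ∀ (γ : ℝ → N) (a b : N), IsGeodesic γ a b → q ∈ γ '' Icc (0:ℝ) 1 →
    ∀ proj : ℕ → N, (∀ n, IsProjOn (x n) (proj n) (γ '' Icc (0:ℝ) 1)) →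
      Filter.Tendsto proj Filter.atTop (nhds q)

/-- `q` is a weak cluster point of the sequence `x`: for every neighborhood `U` of
`q` there are infinitely many `n` such that the projection of `x n` onto any
geodesic arc through `q` lies in `U`. -/
def WeakClusterPt {N : Type*} [MetricSpace N] (x : ℕ → N) (q : N) : Prop :=
  ∀ U ∈ nhds q,
    {n : ℕ | ∀ (γ : ℝ → N) (a b : N), IsGeodesic γ a b → q ∈ γ '' Icc (0:ℝ) 1 →
      ∀ y : N, IsProjOn (x n) y (γ '' Icc (0:ℝ) 1) → y ∈ U}.Infinite

/-!
A mean of points of a closed convex set lies in it (project the mean onto the set and use the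
variance inequality), so the means `mₙ(p)` stay in the closed convex hull `K` of the orbit.
Comparing the sums defining `mₙ(p)` and `mₙ(T p)` gives `n · d(mₙ(T p), mₙ(p))² = O(1)` and
`n · d(T mₙ(p), mₙ(T p))² = O(1)`, hence `d(mₙ(p), T mₙ(p)) → 0`. Distance convexity spreads
`d(mₙ(z), mₙ(p)) → 0` from the orbit to its convex hull, and means never move away from a fixed
point of `T`, so the means converge to every fixed point in `K`. Conversely a weak limit lies in
`K` (weak closedness of closed convex sets) and is fixed by `T` (demiclosedness of nonexpansive
maps); both follow by projecting onto a geodesic arc issuing from the limit. A weak cluster point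
in the sense used here is a cluster point in the metric topology.
-/

open Filter Topology

theorem add_le_of_forall_add_one_sub_mul_le {a b c : ℝ}
    (h : ∀ t : ℝ, 0 < t → t ≤ 1 → a + (1 - t) * b ≤ c) : a + b ≤ c := by
  have hlim : Tendsto (fun t : ℝ => a + (1 - t) * b) (𝓝[>] 0) (𝓝 (a + b)) := by
    have hcont : Continuous fun t : ℝ => a + (1 - t) * b := by fun_prop
    simpa using (hcont.tendsto 0).mono_left nhdsWithin_le_nhds
  refine le_of_tendsto hlim ?_
  filter_upwards [Ioc_mem_nhdsGT zero_lt_one] with t ht using h t ht.1 ht.2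

theorem tendsto_zero_of_forall_mul_sq_le {a : ℕ → ℝ} {c : ℝ} (ha : ∀ n, 0 ≤ a n)
    (h : ∀ n : ℕ, 0 < n → (n : ℝ) * a n ^ 2 ≤ c) : Tendsto a atTop (𝓝 0) := by
  have hsqrt : Tendsto (fun n : ℕ => √(c / n)) atTop (𝓝 0) :=
    (Real.continuous_sqrt.tendsto' 0 0 Real.sqrt_zero).comp
      (tendsto_const_div_atTop_nhds_zero_nat c)
  refine squeeze_zero' (Eventually.of_forall ha) ?_ hsqrt
  filter_upwards [eventually_gt_atTop 0] with n hn
  refine Real.le_sqrt_of_sq_le ?_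
  rw [le_div_iff₀ (by exact_mod_cast hn), mul_comm]
  exact h n hn

def CAT0Inequality (N : Type*) [MetricSpace N] : Prop :=
  ∀ (p q r : N) (γ : ℝ → N), IsGeodesic γ p r → ∀ t ∈ Icc (0:ℝ) 1,
    dist q (γ t) ^ 2 ≤ (1 - t) * dist q p ^ 2 + t * dist q r ^ 2 - t * (1 - t) * dist p r ^ 2

section NPC

variable {N : Type*} [MetricSpace N]

namespace IsGeodesic

variable {γ : ℝ → N} {a b : N}

theorem symm (hγ : IsGeodesic γ a b) : IsGeodesic (fun s => γ (1 - s)) b a := by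
  obtain ⟨h0, h1, hd⟩ := hγ
  refine ⟨by simpa using h1, by simpa using h0, fun s hs t ht => ?_⟩
  rw [hd (1 - s) ⟨by linarith [hs.2], by linarith [hs.1]⟩ (1 - t)
    ⟨by linarith [ht.2], by linarith [ht.1]⟩, dist_comm a b, abs_sub_comm s t]
  ring_nf

theorem dist_left (hγ : IsGeodesic γ a b) {t : ℝ} (ht : t ∈ Icc (0:ℝ) 1) :
    dist (γ t) a = t * dist a b := by
  have := hγ.2.2 t ht 0 (left_mem_Icc.2 zero_le_one)
  rwa [hγ.1, sub_zero, abs_of_nonneg ht.1] at this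

theorem dist_right (hγ : IsGeodesic γ a b) {t : ℝ} (ht : t ∈ Icc (0:ℝ) 1) :
    dist (γ t) b = (1 - t) * dist a b := by
  have := hγ.2.2 t ht 1 (right_mem_Icc.2 zero_le_one)
  rwa [hγ.2.1, abs_of_nonpos (by linarith [ht.2]), neg_sub] at this

theorem continuousOn (hγ : IsGeodesic γ a b) : ContinuousOn γ (Icc (0:ℝ) 1) :=
  (LipschitzOnWith.of_dist_le' (K := dist a b) fun s hs t ht => by
    rw [hγ.2.2 s hs t ht, Real.dist_eq, mul_comm]).continuousOn

theorem isCompact_image (hγ : IsGeodesic γ a b) : IsCompact (γ '' Icc (0:ℝ) 1) :=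
  isCompact_Icc.image_of_continuousOn hγ.continuousOn

theorem left_mem_image (hγ : IsGeodesic γ a b) : a ∈ γ '' Icc (0:ℝ) 1 :=
  ⟨0, left_mem_Icc.2 zero_le_one, hγ.1⟩

theorem right_mem_image (hγ : IsGeodesic γ a b) : b ∈ γ '' Icc (0:ℝ) 1 :=
  ⟨1, right_mem_Icc.2 zero_le_one, hγ.2.1⟩

theorem exists_isProjOn (hγ : IsGeodesic γ a b) (x : N) :
    ∃ y, IsProjOn x y (γ '' Icc (0:ℝ) 1) := by
  obtain ⟨y, hy, hmin⟩ := hγ.isCompact_image.exists_isMinOn ⟨a, hγ.left_mem_image⟩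
    (continuous_const.dist continuous_id).continuousOn
  exact ⟨y, hy, fun z hz => hmin hz⟩

theorem subsegment (hγ : IsGeodesic γ a b) {s r : ℝ} (hs : s ∈ Icc (0:ℝ) 1)
    (hr : r ∈ Icc (0:ℝ) 1) : IsGeodesic (fun u => γ (s + u * (r - s))) (γ s) (γ r) := by
  have hmem : ∀ u ∈ Icc (0:ℝ) 1, s + u * (r - s) ∈ Icc (0:ℝ) 1 := fun u hu =>
    (convex_Icc (0:ℝ) 1).add_smul_sub_mem hs hr hu
  refine ⟨by simp, by simp, fun u hu v hv => ?_⟩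
  rw [hγ.2.2 _ (hmem u hu) _ (hmem v hv), hγ.2.2 s hs r hr,
    show s + u * (r - s) - (s + v * (r - s)) = (u - v) * (r - s) by ring, abs_mul,
    abs_sub_comm s r]
  ring

theorem convexSubset_image (hγ : IsGeodesic γ a b) : ConvexSubset (γ '' Icc (0:ℝ) 1) := by
  rintro _ ⟨s, hs, rfl⟩ _ ⟨r, hr, rfl⟩
  exact ⟨_, hγ.subsegment hs hr, fun u hu =>
    ⟨_, (convex_Icc (0:ℝ) 1).add_smul_sub_mem hs hr hu, rfl⟩⟩

end IsGeodesic

theorem NPCSpace.cat0Inequality (hN : NPCSpace N) : CAT0Inequality N :=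
  hN.2

theorem IsProjOn.sq_dist_add_sq_dist_le {D : Set N} {x y z : N} (hy : IsProjOn x y D)
    (h : CAT0Inequality N) (hD : ConvexSubset D) (hz : z ∈ D) :
    dist x y ^ 2 + dist y z ^ 2 ≤ dist x z ^ 2 := by
  obtain ⟨γ, hγ, hγD⟩ := hD y hy.1 z hz
  refine add_le_of_forall_add_one_sub_mul_le fun t ht0 ht1 => ?_
  have hcat := h y x z γ hγ t ⟨ht0.le, ht1⟩
  have hmin : dist x y ≤ dist x (γ t) := hy.2 _ (hγD t ⟨ht0.le, ht1⟩)
  have hsq : dist x y ^ 2 ≤ dist x (γ t) ^ 2 := pow_le_pow_left₀ dist_nonneg hmin 2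
  have : t * (dist x y ^ 2 + (1 - t) * dist y z ^ 2) ≤ t * dist x z ^ 2 := by nlinarith
  exact le_of_mul_le_mul_left this ht0

theorem IsProjOn.dist_le_two_mul {A : Set N} {x y q : N} (hy : IsProjOn x y A) (hq : q ∈ A) :
    dist y q ≤ 2 * dist x q := by
  have := hy.2 q hq
  linarith [dist_triangle y x q, dist_comm x y]

theorem CAT0Inequality.dist_le_of_isGeodesic_of_isGeodesic_left (h : CAT0Inequality N)
    {γ η : ℝ → N} {a b c : N} (hγ : IsGeodesic γ a b) (hη : IsGeodesic η a c)
    {t : ℝ} (ht : t ∈ Icc (0:ℝ) 1) : dist (γ t) (η t) ≤ t * dist b c := by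
  have h1 := h a (γ t) c η hη t ht
  have h2 := h a c b γ hγ t ht
  rw [hγ.dist_left ht, dist_comm (γ t) c] at h1
  refine le_of_pow_le_pow_left₀ two_ne_zero (mul_nonneg ht.1 dist_nonneg) ?_
  rw [dist_comm c a, dist_comm c b] at h2
  nlinarith [mul_le_mul_of_nonneg_left h2 ht.1]

theorem NPCSpace.dist_le_of_isGeodesic_of_isGeodesic (hN : NPCSpace N) {γ σ : ℝ → N}
    {a b a' b' : N} (hγ : IsGeodesic γ a b) (hσ : IsGeodesic σ a' b') {t : ℝ}
    (ht : t ∈ Icc (0:ℝ) 1) : dist (γ t) (σ t) ≤ (1 - t) * dist a a' + t * dist b b' := by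
  obtain ⟨η, hη⟩ := hN.1 a b'
  have ht' : 1 - t ∈ Icc (0:ℝ) 1 := ⟨by linarith [ht.2], by linarith [ht.1]⟩
  have h1 := hN.cat0Inequality.dist_le_of_isGeodesic_of_isGeodesic_left hγ hη ht
  have h2 := hN.cat0Inequality.dist_le_of_isGeodesic_of_isGeodesic_left hη.symm hσ.symm ht'
  simp only [sub_sub_cancel] at h2
  linarith [dist_triangle (γ t) (η t) (σ t), dist_comm a a']

theorem NPCSpace.convexSubset_closure (hN : NPCSpace N) {D : Set N} (hD : ConvexSubset D) :
    ConvexSubset (closure D) := by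
  intro a ha b hb
  obtain ⟨γ, hγ⟩ := hN.1 a b
  refine ⟨γ, hγ, fun t ht => Metric.mem_closure_iff.2 fun ε hε => ?_⟩
  obtain ⟨a', ha', haa'⟩ := Metric.mem_closure_iff.1 ha (ε / 2) (half_pos hε)
  obtain ⟨b', hb', hbb'⟩ := Metric.mem_closure_iff.1 hb (ε / 2) (half_pos hε)
  obtain ⟨σ, hσ, hσD⟩ := hD a' ha' b' hb'
  refine ⟨σ t, hσD t ht, ?_⟩
  have h1t : 0 ≤ 1 - t := by linarith [ht.2]
  calc dist (γ t) (σ t) ≤ (1 - t) * dist a a' + t * dist b b' :=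
        hN.dist_le_of_isGeodesic_of_isGeodesic hγ hσ ht
    _ ≤ (1 - t) * (ε / 2) + t * (ε / 2) := by gcongr; exact ht.1
    _ < ε := by linarith

theorem CAT0Inequality.sq_dist_le_of_convexSubset (h : CAT0Inequality N) {D : Set N}
    (hD : ConvexSubset D) {x z z' : N} {c : ℝ} (hc : ∀ w ∈ D, c ≤ dist x w ^ 2) (hz : z ∈ D)
    (hz' : z' ∈ D) : dist z z' ^ 2 ≤ 2 * dist x z ^ 2 + 2 * dist x z' ^ 2 - 4 * c := by
  obtain ⟨γ, hγ, hγD⟩ := hD z hz z' hz'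
  have hmid : (1 / 2 : ℝ) ∈ Icc (0:ℝ) 1 := ⟨by norm_num, by norm_num⟩
  have hcat := h z x z' γ hγ _ hmid
  have hmin := hc _ (hγD _ hmid)
  linarith

/-- A minimizing sequence is Cauchy by `sq_dist_le_of_convexSubset`. -/
theorem CAT0Inequality.exists_isProjOn [CompleteSpace N] (h : CAT0Inequality N) {D : Set N}
    (hD : ConvexSubset D) (hcl : IsClosed D) (hne : D.Nonempty) (x : N) :
    ∃ y, IsProjOn x y D := by
  set S := (fun w => dist x w ^ 2) '' D
  have hS : BddBelow S := ⟨0, by rintro _ ⟨w, -, rfl⟩; positivity⟩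
  have hc : ∀ w ∈ D, sInf S ≤ dist x w ^ 2 := fun w hw => csInf_le hS ⟨w, hw, rfl⟩
  obtain ⟨u, hu_anti, hu_lim, hu_mem⟩ := exists_seq_tendsto_sInf (S := S) (hne.image _) hS
  choose z hzD hzu using hu_mem
  simp only at hzu
  have hcauchy : CauchySeq z := by
    refine cauchySeq_of_le_tendsto_0 (fun k => √(4 * (u k - sInf S))) (fun k l K hk hl => ?_) ?_
    · refine Real.le_sqrt_of_sq_le ?_
      have := h.sq_dist_le_of_convexSubset hD hc (hzD k) (hzD l)
      rw [hzu, hzu] at this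
      linarith [hu_anti hk, hu_anti hl]
    · have h4 : Tendsto (fun k => 4 * (u k - sInf S)) atTop (𝓝 0) := by
        simpa using (hu_lim.sub_const (sInf S)).const_mul 4
      exact (Real.continuous_sqrt.tendsto' 0 0 Real.sqrt_zero).comp h4
  obtain ⟨y, hy⟩ := cauchySeq_tendsto_of_complete hcauchy
  refine ⟨y, hcl.mem_of_tendsto hy (Eventually.of_forall hzD), fun w hw => ?_⟩
  have hlim : Tendsto (fun k => dist x (z k) ^ 2) atTop (𝓝 (dist x y ^ 2)) :=
    (tendsto_const_nhds.dist hy).pow 2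
  have hy_inf : dist x y ^ 2 = sInf S := tendsto_nhds_unique hlim (by simpa only [hzu] using hu_lim)
  exact le_of_pow_le_pow_left₀ two_ne_zero dist_nonneg (hy_inf ▸ hc w hw)

def IsMean {ι : Type*} (s : Finset ι) (w : ι → N) (μ : N) : Prop :=
  ∀ r, ∑ i ∈ s, dist μ (w i) ^ 2 ≤ ∑ i ∈ s, dist r (w i) ^ 2

namespace IsMean

variable {ι : Type*} {s : Finset ι} {w : ι → N} {μ : N}

theorem variance (hμ : IsMean s w μ) (hN : NPCSpace N) (r : N) :
    ∑ i ∈ s, dist μ (w i) ^ 2 + s.card * dist r μ ^ 2 ≤ ∑ i ∈ s, dist r (w i) ^ 2 := by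
  obtain ⟨γ, hγ⟩ := hN.1 μ r
  refine add_le_of_forall_add_one_sub_mul_le fun t ht0 ht1 => ?_
  have hsum : ∑ i ∈ s, dist (γ t) (w i) ^ 2 ≤ ∑ i ∈ s,
      ((1 - t) * dist μ (w i) ^ 2 + t * dist r (w i) ^ 2 - t * (1 - t) * dist μ r ^ 2) := by
    refine Finset.sum_le_sum fun i _ => ?_
    have := hN.2 μ (w i) r γ hγ t ⟨ht0.le, ht1⟩
    rwa [dist_comm (w i) (γ t), dist_comm (w i) μ, dist_comm (w i) r] at this
  rw [Finset.sum_sub_distrib, Finset.sum_add_distrib, ← Finset.mul_sum, ← Finset.mul_sum,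
    Finset.sum_const, nsmul_eq_mul] at hsum
  have hmin := hμ (γ t)
  have : t * (∑ i ∈ s, dist μ (w i) ^ 2 + (1 - t) * (s.card * dist r μ ^ 2)) ≤
      t * ∑ i ∈ s, dist r (w i) ^ 2 := by
    rw [dist_comm r μ]
    linarith
  exact le_of_mul_le_mul_left this ht0

theorem dist_le (hμ : IsMean s w μ) (hN : NPCSpace N) (hs : s.Nonempty) {r : N} {ρ : ℝ}
    (hw : ∀ i ∈ s, dist r (w i) ≤ ρ) : dist r μ ≤ ρ := by
  obtain ⟨i, hi⟩ := hs
  have hρ : 0 ≤ ρ := dist_nonneg.trans (hw i hi)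
  have hcard : (0:ℝ) < s.card := by exact_mod_cast Finset.card_pos.2 ⟨i, hi⟩
  have hsum : ∑ i ∈ s, dist r (w i) ^ 2 ≤ s.card * ρ ^ 2 := by
    simpa using Finset.sum_le_sum fun i hi => pow_le_pow_left₀ dist_nonneg (hw i hi) 2
  have hnonneg : 0 ≤ ∑ i ∈ s, dist μ (w i) ^ 2 := Finset.sum_nonneg fun _ _ => sq_nonneg _
  have := hμ.variance hN r
  refine le_of_pow_le_pow_left₀ two_ne_zero hρ (le_of_mul_le_mul_left ?_ hcard)
  linarith

theorem mem [CompleteSpace N] (hμ : IsMean s w μ) (hN : NPCSpace N) (hs : s.Nonempty)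
    {K : Set N} (hK : ConvexSubset K) (hKc : IsClosed K) (hw : ∀ i ∈ s, w i ∈ K) : μ ∈ K := by
  obtain ⟨i, hi⟩ := hs
  obtain ⟨y, hy⟩ := hN.cat0Inequality.exists_isProjOn hK hKc ⟨w i, hw i hi⟩ μ
  have hle : ∑ i ∈ s, dist y (w i) ^ 2 ≤ ∑ i ∈ s, dist μ (w i) ^ 2 := by
    refine Finset.sum_le_sum fun j hj => ?_
    have := hy.sq_dist_add_sq_dist_le hN.cat0Inequality hK (hw j hj)
    nlinarith [sq_nonneg (dist μ y)]
  have hcard : (0:ℝ) < s.card := by exact_mod_cast Finset.card_pos.2 ⟨i, hi⟩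
  have := hμ.variance hN y
  have hsq : dist y μ ^ 2 ≤ 0 := le_of_mul_le_mul_left (by linarith [mul_zero (s.card : ℝ)]) hcard
  exact dist_eq_zero.1 ((sq_nonpos_iff _).1 hsq) ▸ hy.1

end IsMean

theorem sum_range_iterate_apply_add {α M : Type*} [AddCommMonoid M] (f : α → M) (T : α → α)
    (z : α) (n : ℕ) :
    ∑ i ∈ Finset.range n, f (T^[i] (T z)) + f z =
      ∑ i ∈ Finset.range n, f (T^[i] z) + f (T^[n] z) := by
  rw [← Finset.sum_range_succ (fun i => f (T^[i] z)), Finset.sum_range_succ']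
  rfl

section OrbitMean

variable {T : N → N} {z A B : N} {n : ℕ}

theorem IsMean.mul_sq_dist_mean_map_le (hN : NPCSpace N)
    (hA : IsMean (Finset.range n) (fun i => T^[i] z) A)
    (hB : IsMean (Finset.range n) (fun i => T^[i] (T z)) B) :
    n * dist B A ^ 2 ≤ dist A (T^[n] z) ^ 2 + dist B z ^ 2 := by
  have hvar := hA.variance hN B
  rw [Finset.card_range] at hvar
  have hmin := hB A
  have hshiftA := sum_range_iterate_apply_add (fun x => dist A x ^ 2) T z n
  have hshiftB := sum_range_iterate_apply_add (fun x => dist B x ^ 2) T z n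
  linarith [sq_nonneg (dist A z), sq_nonneg (dist B (T^[n] z))]

theorem IsMean.mul_sq_dist_map_mean_le (hN : NPCSpace N)
    (hT : ∀ x y : N, dist (T x) (T y) ≤ dist x y)
    (hA : IsMean (Finset.range n) (fun i => T^[i] z) A)
    (hB : IsMean (Finset.range n) (fun i => T^[i] (T z)) B) :
    n * dist (T A) B ^ 2 ≤ dist B z ^ 2 := by
  have hvar := hB.variance hN (T A)
  rw [Finset.card_range] at hvar
  have hTsum : ∑ i ∈ Finset.range n, dist (T A) (T^[i] (T z)) ^ 2 ≤
      ∑ i ∈ Finset.range n, dist A (T^[i] z) ^ 2 := by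
    refine Finset.sum_le_sum fun i _ => ?_
    rw [← Function.iterate_succ_apply, Function.iterate_succ_apply']
    exact pow_le_pow_left₀ dist_nonneg (hT _ _) 2
  have hmin := hA B
  have hshift := sum_range_iterate_apply_add (fun x => dist B x ^ 2) T z n
  linarith [sq_nonneg (dist B (T^[n] z))]

variable {m : ℕ → N → N}

theorem dist_mean_le_of_forall (hN : NPCSpace N)
    (hm : ∀ n : ℕ, 0 < n → ∀ z, IsMean (Finset.range n) (fun i => T^[i] z) (m n z))
    (hn : 0 < n) (z : N) {r : N} {ρ : ℝ} (h : ∀ i, dist r (T^[i] z) ≤ ρ) : dist r (m n z) ≤ ρ :=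
  (hm n hn z).dist_le hN (Finset.nonempty_range_iff.2 hn.ne') fun i _ => h i

variable {R : ℝ}

theorem tendsto_dist_mean_map_mean (hN : NPCSpace N)
    (hm : ∀ n : ℕ, 0 < n → ∀ z, IsMean (Finset.range n) (fun i => T^[i] z) (m n z))
    (hR : ∀ i k, dist (T^[i] z) (T^[k] z) ≤ R) :
    Tendsto (fun n => dist (m n (T z)) (m n z)) atTop (𝓝 0) := by
  refine tendsto_zero_of_forall_mul_sq_le (c := R ^ 2 + R ^ 2) (fun _ => dist_nonneg) fun n hn => ?_
  have hA := dist_mean_le_of_forall hN hm hn z fun i => hR n i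
  have hB : dist z (m n (T z)) ≤ R := dist_mean_le_of_forall hN hm hn (T z) fun i => hR 0 (i + 1)
  have := (hm n hn z).mul_sq_dist_mean_map_le hN (hm n hn (T z))
  rw [dist_comm (m n z), dist_comm (m n (T z)) z] at this
  linarith [pow_le_pow_left₀ dist_nonneg hA 2, pow_le_pow_left₀ dist_nonneg hB 2]

theorem tendsto_dist_mean_map (hN : NPCSpace N) (hT : ∀ x y : N, dist (T x) (T y) ≤ dist x y)
    (hm : ∀ n : ℕ, 0 < n → ∀ z, IsMean (Finset.range n) (fun i => T^[i] z) (m n z))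
    (hR : ∀ i k, dist (T^[i] z) (T^[k] z) ≤ R) :
    Tendsto (fun n => dist (m n z) (T (m n z))) atTop (𝓝 0) := by
  have hstep : Tendsto (fun n => dist (T (m n z)) (m n (T z))) atTop (𝓝 0) := by
    refine tendsto_zero_of_forall_mul_sq_le (c := R ^ 2) (fun _ => dist_nonneg) fun n hn => ?_
    have hB : dist z (m n (T z)) ≤ R := dist_mean_le_of_forall hN hm hn (T z) fun i => hR 0 (i + 1)
    have := (hm n hn z).mul_sq_dist_map_mean_le hN hT (hm n hn (T z))
    rw [dist_comm (m n (T z)) z] at this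
    linarith [pow_le_pow_left₀ dist_nonneg hB 2]
  have hsum := (tendsto_dist_mean_map_mean hN hm hR).add hstep
  rw [zero_add] at hsum
  refine squeeze_zero (fun _ => dist_nonneg) (fun n => ?_) hsum
  linarith [dist_triangle (m n z) (m n (T z)) (T (m n z)), dist_comm (m n z) (m n (T z)),
    dist_comm (T (m n z)) (m n (T z))]

theorem tendsto_dist_mean_iterate (hN : NPCSpace N)
    (hm : ∀ n : ℕ, 0 < n → ∀ z, IsMean (Finset.range n) (fun i => T^[i] z) (m n z))
    (hR : ∀ i k, dist (T^[i] z) (T^[k] z) ≤ R) (j : ℕ) :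
    Tendsto (fun n => dist (m n (T^[j] z)) (m n z)) atTop (𝓝 0) := by
  induction j with
  | zero => simp
  | succ j ih =>
    have hRj : ∀ i k, dist (T^[i] (T^[j] z)) (T^[k] (T^[j] z)) ≤ R := fun i k => by
      simpa only [← Function.iterate_add_apply] using hR (i + j) (k + j)
    have hstep := tendsto_dist_mean_map_mean hN hm hRj
    rw [← Function.iterate_succ_apply' T j z] at hstep
    have hsum := hstep.add ih
    rw [zero_add] at hsum
    exact squeeze_zero (fun _ => dist_nonneg) (fun n => dist_triangle _ _ _) hsum

theorem dist_mean_le_of_isFixedPt (hN : NPCSpace N) (hT : ∀ x y : N, dist (T x) (T y) ≤ dist x y)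
    (hm : ∀ n : ℕ, 0 < n → ∀ z, IsMean (Finset.range n) (fun i => T^[i] z) (m n z))
    (hn : 0 < n) {q : N} (hq : Function.IsFixedPt T q) (z : N) : dist q (m n z) ≤ dist q z :=
  dist_mean_le_of_forall hN hm hn z fun i => by
    simpa [(hq.iterate i).eq] using ((LipschitzWith.mk_one hT).iterate i).dist_le_mul q z

theorem tendsto_mean_of_isFixedPt (hN : NPCSpace N) (hT : ∀ x y : N, dist (T x) (T y) ≤ dist x y)
    (hm : ∀ n : ℕ, 0 < n → ∀ z, IsMean (Finset.range n) (fun i => T^[i] z) (m n z))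
    {C : Set N} {x : N} (hC : ∀ z ∈ C, Tendsto (fun n => dist (m n z) (m n x)) atTop (𝓝 0))
    {q : N} (hq : Function.IsFixedPt T q) (hqC : q ∈ closure C) :
    Tendsto (fun n => m n x) atTop (𝓝 q) := by
  refine Metric.tendsto_nhds.2 fun ε hε => ?_
  obtain ⟨z, hzC, hqz⟩ := Metric.mem_closure_iff.1 hqC (ε / 2) (half_pos hε)
  filter_upwards [(hC z hzC).eventually (gt_mem_nhds (half_pos hε)), eventually_gt_atTop 0]
    with n hn hn0
  have := dist_mean_le_of_isFixedPt hN hT hm hn0 hq z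
  linarith [dist_triangle (m n x) (m n z) q, dist_comm (m n x) (m n z), dist_comm q (m n z)]

end OrbitMean

def DistanceConvex (F : ℕ → N → N) : Prop :=
  ∀ n : ℕ, ∀ q : N, ∀ (γ : ℝ → N) (a b : N), IsGeodesic γ a b → ∀ t ∈ Icc (0:ℝ) 1,
    dist (F n (γ t)) q ^ 2 ≤ (1 - t) * dist (F n a) q ^ 2 + t * dist (F n b) q ^ 2

theorem DistanceConvex.convexSubset_setOf_tendsto {F : ℕ → N → N} (hF : DistanceConvex F)
    (hGeo : GeodesicSpace N) (y : ℕ → N) :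
    ConvexSubset {z | Tendsto (fun n => dist (F n z) (y n)) atTop (𝓝 0)} := by
  intro a ha b hb
  obtain ⟨γ, hγ⟩ := hGeo a b
  refine ⟨γ, hγ, fun t ht => ?_⟩
  have hsum := Tendsto.add ha hb
  rw [zero_add] at hsum
  refine squeeze_zero (fun _ => dist_nonneg) (fun n => ?_) hsum
  have hconv := hF n (y n) γ a b hγ t ht
  refine le_of_pow_le_pow_left₀ two_ne_zero (add_nonneg dist_nonneg dist_nonneg) ?_
  nlinarith [mul_nonneg ht.1 (sq_nonneg (dist (F n a) (y n))),
    mul_nonneg (sub_nonneg.2 ht.2) (sq_nonneg (dist (F n b) (y n))),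
    mul_nonneg (dist_nonneg (x := F n a) (y := y n)) (dist_nonneg (x := F n b) (y := y n))]

theorem IsConvexHull.tendsto_dist_mean {T : N → N} {m : ℕ → N → N} {p : N} {C : Set N}
    (hC : IsConvexHull (range fun i : ℕ => T^[i] p) C) (hN : NPCSpace N)
    (hm : ∀ n : ℕ, 0 < n → ∀ z, IsMean (Finset.range n) (fun i => T^[i] z) (m n z))
    (hdc : DistanceConvex m) {R : ℝ} (hR : ∀ i k, dist (T^[i] p) (T^[k] p) ≤ R) {z : N}
    (hz : z ∈ C) : Tendsto (fun n => dist (m n z) (m n p)) atTop (𝓝 0) :=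
  hC.2.2 _ (hdc.convexSubset_setOf_tendsto hN.1 _)
    (by rintro _ ⟨j, rfl⟩; exact tendsto_dist_mean_iterate hN hm hR j) hz

section WeakConvergence

variable {x : ℕ → N} {q : N}

theorem Filter.Tendsto.weakLimit (h : Tendsto x atTop (𝓝 q)) : WeakLimit x q := by
  intro γ a b hγ hq y hy
  have h2 : Tendsto (fun n => 2 * dist (x n) q) atTop (𝓝 0) := by
    simpa using (tendsto_iff_dist_tendsto_zero.1 h).const_mul 2
  exact tendsto_iff_dist_tendsto_zero.2
    (squeeze_zero (fun _ => dist_nonneg) (fun n => (hy n).dist_le_two_mul hq) h2)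

theorem Filter.Tendsto.weakClusterPt (h : Tendsto x atTop (𝓝 q)) : WeakClusterPt x q := by
  intro U hU
  obtain ⟨ε, hε, hball⟩ := Metric.mem_nhds_iff.1 hU
  refine Nat.frequently_atTop_iff_infinite.1 (Eventually.frequently ?_)
  filter_upwards [Metric.tendsto_nhds.1 h (ε / 2) (half_pos hε)] with n hn γ a b hγ hq y hy
  exact hball (Metric.mem_ball.2 (by linarith [hy.dist_le_two_mul hq]))

/-- Projecting `x n` onto a geodesic from `q` to `x n` returns `x n` itself. -/
theorem WeakClusterPt.mapClusterPt (hGeo : GeodesicSpace N) (h : WeakClusterPt x q) :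
    MapClusterPt q atTop x := by
  refine mapClusterPt_iff_frequently.2 fun U hU =>
    Nat.frequently_atTop_iff_infinite.2 ((h U hU).mono fun n hn => ?_)
  obtain ⟨γ, hγ⟩ := hGeo q (x n)
  exact hn γ q (x n) hγ hγ.left_mem_image (x n)
    ⟨hγ.right_mem_image, fun z _ => by rw [dist_self]; exact dist_nonneg⟩

theorem MapClusterPt.isFixedPt_of_tendsto_dist {T : N → N} (hc : MapClusterPt q atTop x)
    (hT : Continuous T) (hreg : Tendsto (fun n => dist (x n) (T (x n))) atTop (𝓝 0)) :
    Function.IsFixedPt T q := by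
  obtain ⟨φ, hφ, hxφ⟩ := hc.tendsto_subseq
  have hlim : Tendsto (fun n => dist (x (φ n)) (T (x (φ n)))) atTop (𝓝 (dist q (T q))) :=
    hxφ.dist ((hT.tendsto q).comp hxφ)
  exact (dist_eq_zero.1 (tendsto_nhds_unique hlim (hreg.comp hφ.tendsto_atTop))).symm

theorem WeakLimit.exists_tendsto_isProjOn (h : WeakLimit x q) {γ : ℝ → N} {z : N}
    (hγ : IsGeodesic γ q z) :
    ∃ y : ℕ → N, (∀ n, IsProjOn (x n) (y n) (γ '' Icc (0:ℝ) 1)) ∧ Tendsto y atTop (𝓝 q) := by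
  choose y hy using fun n => hγ.exists_isProjOn (x n)
  exact ⟨y, hy, h γ q z hγ hγ.left_mem_image y hy⟩

theorem CAT0Inequality.sq_dist_le_of_isProjOn_of_isProjOn (h : CAT0Inequality N) {K : Set N}
    (hK : ConvexSubset K) {P x y : N} {γ : ℝ → N} (hP : IsProjOn q P K) (hγ : IsGeodesic γ q P)
    (hy : IsProjOn x y (γ '' Icc (0:ℝ) 1)) (hx : x ∈ K) :
    dist q P ^ 2 ≤ dist y q * (dist q P + dist x q) := by
  have hdx : dist x y ≤ dist x q := hy.2 q hγ.left_mem_image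
  have hb := hy.sq_dist_add_sq_dist_le h hγ.convexSubset_image hγ.right_mem_image
  obtain ⟨t, ht, rfl⟩ := hy.1
  have ha := hP.sq_dist_add_sq_dist_le h hK hx
  rw [hγ.dist_right ht, dist_comm x P] at hb
  rw [hγ.dist_left ht]
  have hqx : dist q x ≤ t * dist q P + dist x (γ t) := by
    linarith [dist_triangle q (γ t) x, hγ.dist_left ht, dist_comm q (γ t), dist_comm x (γ t)]
  have hqx2 := pow_le_pow_left₀ dist_nonneg hqx 2
  have htd := mul_le_mul_of_nonneg_left hdx (mul_nonneg ht.1 (dist_nonneg (x := q) (y := P)))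
  nlinarith [ht.1, ht.2]

theorem WeakLimit.mem_of_eventually_mem [CompleteSpace N] (h : WeakLimit x q) (hN : NPCSpace N)
    {K : Set N} (hK : ConvexSubset K) (hKc : IsClosed K) (hx : ∀ᶠ n in atTop, x n ∈ K) {M : ℝ}
    (hM : ∀ᶠ n in atTop, dist (x n) q ≤ M) : q ∈ K := by
  obtain ⟨n₀, hn₀⟩ := hx.exists
  obtain ⟨P, hP⟩ := hN.cat0Inequality.exists_isProjOn hK hKc ⟨_, hn₀⟩ q
  obtain ⟨γ, hγ⟩ := hN.1 q P
  obtain ⟨y, hy, hyq⟩ := h.exists_tendsto_isProjOn hγ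
  have hlim : Tendsto (fun n => dist (y n) q * (dist q P + M)) atTop (𝓝 0) := by
    simpa using (tendsto_iff_dist_tendsto_zero.1 hyq).mul_const (dist q P + M)
  have hL : dist q P ^ 2 ≤ 0 := by
    refine ge_of_tendsto hlim ?_
    filter_upwards [hx, hM] with n hxn hMn
    exact (hN.cat0Inequality.sq_dist_le_of_isProjOn_of_isProjOn hK hP hγ (hy n) hxn).trans
      (by gcongr)
  exact dist_eq_zero.1 ((sq_nonpos_iff _).1 hL) ▸ hP.1

theorem CAT0Inequality.sq_dist_map_le (h : CAT0Inequality N) {T : N → N}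
    (hT : ∀ x y : N, dist (T x) (T y) ≤ dist x y) {γ : ℝ → N} {x y : N}
    (hγ : IsGeodesic γ q (T q)) (hy : IsProjOn x y (γ '' Icc (0:ℝ) 1)) :
    dist q (T q) ^ 2 / 4 ≤ dist x q * dist x (T x) + dist x (T x) ^ 2 / 2 +
      2 * (dist x q + dist q (T q)) * dist y q + dist y q ^ 2 := by
  have hmid : (1 / 2 : ℝ) ∈ Icc (0:ℝ) 1 := ⟨by norm_num, by norm_num⟩
  have hcat := h q x (T q) γ hγ _ hmid
  have hproj := hy.2 _ ⟨_, hmid, rfl⟩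
  have hA : dist x q ≤ dist x (γ (1 / 2)) + dist y q := by linarith [dist_triangle x y q]
  have hB : dist x (T q) ≤ dist x (T x) + dist x q := by
    linarith [dist_triangle x (T x) (T q), hT x q]
  have hD : dist x (γ (1 / 2)) ≤ dist x q + dist q (T q) := by
    linarith [dist_triangle x q (γ (1 / 2)), hγ.dist_left hmid, dist_comm q (γ (1 / 2)),
      dist_nonneg (x := q) (y := T q)]
  have hA2 := pow_le_pow_left₀ dist_nonneg hA 2
  have hB2 := pow_le_pow_left₀ dist_nonneg hB 2
  have hDr := mul_le_mul_of_nonneg_right hD (dist_nonneg (x := y) (y := q))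
  nlinarith

theorem WeakLimit.isFixedPt (h : WeakLimit x q) (hN : NPCSpace N) {T : N → N}
    (hT : ∀ x y : N, dist (T x) (T y) ≤ dist x y) {M : ℝ} (hM : ∀ᶠ n in atTop, dist (x n) q ≤ M)
    (hreg : Tendsto (fun n => dist (x n) (T (x n))) atTop (𝓝 0)) : Function.IsFixedPt T q := by
  obtain ⟨γ, hγ⟩ := hN.1 q (T q)
  obtain ⟨y, hy, hyq⟩ := h.exists_tendsto_isProjOn hγ
  have hr := tendsto_iff_dist_tendsto_zero.1 hyq
  have hlim : Tendsto (fun n => M * dist (x n) (T (x n)) + dist (x n) (T (x n)) ^ 2 / 2 +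
      2 * (M + dist q (T q)) * dist (y n) q + dist (y n) q ^ 2) atTop (𝓝 0) := by
    simpa using (((hreg.const_mul M).add ((hreg.pow 2).div_const 2)).add
      (hr.const_mul (2 * (M + dist q (T q))))).add (hr.pow 2)
  have hδ : dist q (T q) ^ 2 / 4 ≤ 0 := by
    refine ge_of_tendsto hlim ?_
    filter_upwards [hM] with n hn
    have := hN.cat0Inequality.sq_dist_map_le hT hγ (hy n)
    nlinarith [mul_le_mul_of_nonneg_right hn (dist_nonneg (x := x n) (y := T (x n))),
      mul_le_mul_of_nonneg_right hn (dist_nonneg (x := y n) (y := q))]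
  exact (dist_eq_zero.1 ((sq_nonpos_iff _).1 (by linarith))).symm

end WeakConvergence

end NPC

theorem npc_mean_ergodic_theorem_general {N : Type*} [MetricSpace N] [CompleteSpace N]
    (hN : NPCSpace N) (T : N → N)
    (hT : ∀ x y : N, dist (T x) (T y) ≤ dist x y)
    (m : ℕ → N → N)
    (hm : ∀ n : ℕ, 0 < n → ∀ x r : N,
      (1 / (n : ℝ)) * ∑ i ∈ Finset.range n, dist (m n x) (T^[i] x) ^ 2 ≤
        (1 / (n : ℝ)) * ∑ i ∈ Finset.range n, dist r (T^[i] x) ^ 2)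
    (hdc : ∀ n : ℕ, ∀ q : N, ∀ (γ : ℝ → N) (a b : N), IsGeodesic γ a b →
      ∀ t ∈ Icc (0:ℝ) 1,
        dist (m n (γ t)) q ^ 2 ≤
          (1 - t) * dist (m n a) q ^ 2 + t * dist (m n b) q ^ 2)
    (p : N) (hbdd : Bornology.IsBounded (Set.range fun i : ℕ => T^[i] p))
    (C : Set N) (hC : IsConvexHull (Set.range fun i : ℕ => T^[i] p) C)
    (q : N) :
    List.TFAE
      [T q = q ∧ q ∈ closure C,
       Filter.Tendsto (fun n => m n p) Filter.atTop (nhds q),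
       WeakLimit (fun n => m n p) q,
       WeakClusterPt (fun n => m n p) q] := by
  have hmean : ∀ n : ℕ, 0 < n → ∀ z, IsMean (Finset.range n) (fun i => T^[i] z) (m n z) :=
    fun n hn z r => le_of_mul_le_mul_left (hm n hn z r) (one_div_pos.2 (Nat.cast_pos.2 hn))
  obtain ⟨R, hR⟩ : ∃ R, ∀ i k : ℕ, dist (T^[i] p) (T^[k] p) ≤ R :=
    (Metric.isBounded_iff.1 hbdd).imp fun R hR i k => hR ⟨i, rfl⟩ ⟨k, rfl⟩
  have hK : ConvexSubset (closure C) := hN.convexSubset_closure hC.1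
  have hmemK : ∀ᶠ n in atTop, m n p ∈ closure C := by
    filter_upwards [eventually_gt_atTop 0] with n hn
    exact (hmean n hn p).mem hN (Finset.nonempty_range_iff.2 hn.ne') hK isClosed_closure
      fun i _ => subset_closure (hC.2.1 ⟨i, rfl⟩)
  have hbound : ∀ᶠ n in atTop, dist (m n p) q ≤ R + dist p q := by
    filter_upwards [eventually_gt_atTop 0] with n hn
    have : dist p (m n p) ≤ R := dist_mean_le_of_forall hN hmean hn p fun i => hR 0 i
    linarith [dist_triangle (m n p) p q, dist_comm p (m n p)]
  have hreg := tendsto_dist_mean_map hN hT hmean hR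
  tfae_have 1 → 2 := fun ⟨hq, hqC⟩ => tendsto_mean_of_isFixedPt hN hT hmean
    (fun z hz => hC.tendsto_dist_mean hN hmean hdc hR hz) hq hqC
  tfae_have 2 → 3 := Tendsto.weakLimit
  tfae_have 2 → 4 := Tendsto.weakClusterPt
  tfae_have 3 → 1 := fun h =>
    ⟨h.isFixedPt hN hT hbound hreg, h.mem_of_eventually_mem hN hK isClosed_closure hmemK hbound⟩
  tfae_have 4 → 1 := fun h =>
    have hc := h.mapClusterPt hN.1
    ⟨hc.isFixedPt_of_tendsto_dist (LipschitzWith.mk_one hT).continuous hreg,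
      isClosed_closure.mem_of_mapClusterPt hc hmemK⟩
  tfae_finish

/-- Mean ergodic theorem: for a nonexpansive, distance convex map
`T` on a complete global Alexandrov NPC space, a point `p` with bounded orbit and
any `q`, the conditions (i)–(iv) are equivalent.  Here `m n x` is the unique
minimizer of `r ↦ (1/n) ∑_{i<n} d²(r, Tⁱ x)`. -/
theorem npc_mean_ergodic_theorem {N : Type*} [MetricSpace N] [CompleteSpace N]
    (hN : NPCSpace N) (T : N → N)
    (hT : ∀ x y : N, dist (T x) (T y) ≤ dist x y)
    (m : ℕ → N → N)
    (hm : ∀ n : ℕ, 0 < n → ∀ x r : N,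
      (1 / (n : ℝ)) * ∑ i ∈ Finset.range n, dist (m n x) (T^[i] x) ^ 2 ≤
        (1 / (n : ℝ)) * ∑ i ∈ Finset.range n, dist r (T^[i] x) ^ 2)
    (hmuniq : ∀ n : ℕ, 0 < n → ∀ x r : N,
      ((1 / (n : ℝ)) * ∑ i ∈ Finset.range n, dist r (T^[i] x) ^ 2 =
        (1 / (n : ℝ)) * ∑ i ∈ Finset.range n, dist (m n x) (T^[i] x) ^ 2) → r = m n x)
    (hdc : ∀ n : ℕ, ∀ q : N, ∀ (γ : ℝ → N) (a b : N), IsGeodesic γ a b →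
      ∀ t ∈ Icc (0:ℝ) 1,
        dist (m n (γ t)) q ^ 2 ≤
          (1 - t) * dist (m n a) q ^ 2 + t * dist (m n b) q ^ 2)
    (p : N) (hbdd : Bornology.IsBounded (Set.range fun i : ℕ => T^[i] p))
    (C : Set N) (hC : IsConvexHull (Set.range fun i : ℕ => T^[i] p) C)
    (q : N) :
    List.TFAE
      [T q = q ∧ q ∈ closure C,
       Filter.Tendsto (fun n => m n p) Filter.atTop (nhds q),
       WeakLimit (fun n => m n p) q,
       WeakClusterPt (fun n => m n p) q] :=
  npc_mean_ergodic_theorem_general hN T hT m hm hdc p hbdd C hC q
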